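/- Let a > 0, r ∈ (0,1), and let f ∈ C²([0,r]) solve the profile equation on (0,r] with f(0) = a, f'(0) = 0. Then f(x) > 0 for all x ∈ [0,r] and f''(x) < 0 for all x ∈ [0,r). -/

import Mathlib

open Set

/-- `f ∈ C²(S)` solves the profile equation
`f''(x) = (1 + f'(x)²)[f'(x)(x - 1/x) - f(x)]` for `x ∈ S \ {0}`,
with initial data `f(0) = a`, `f'(0) = 0`. -/
def SolvesProfile (a : ℝ) (S : Set ℝ) (f : ℝ → ℝ) : Prop :=
  ContDiffOn ℝ 2 f S ∧ f 0 = a ∧ derivWithin f S 0 = 0 ∧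
  ∀ x ∈ S, x ≠ 0 →
    derivWithin (derivWithin f S) S x
      = (1 + (derivWithin f S x) ^ 2) * (derivWithin f S x * (x - 1 / x) - f x)

/-!
Write the equation as `f'' = (1 + f'²) H` with `H(x) = f'(x)(x - 1/x) - f(x)`.
Since `f'(0) = 0`, `f'(x)/x → f''(0)`, so `H(x) → -f''(0) - a` as `x → 0⁺`; evaluating the
equation in the limit gives `f''(0) = -a/2`, hence `H < 0` near `0`.
If `H` became nonnegative, let `c` be the first such point. On `(0, c)` we have `f'' < 0`, so
`f'(c) < 0`, while `f''(c) ≥ 0`; as `c < 1`,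
`H'(c) = f''(c)(c - 1/c) + f'(c)/c² < 0`, contradicting `H < 0 ≤ H(c)` to the left of `c`.
So `H < 0` on `(0, r]`, whence `f'' < 0`, `f' < 0` and `f = f'·(x - 1/x) - H > 0`.
-/

open Filter Topology

theorem sub_one_div_neg {x : ℝ} (h0 : 0 < x) (h1 : x < 1) : x - 1 / x < 0 := by
  rw [sub_neg, lt_div_iff₀ h0]
  nlinarith

theorem ContinuousOn.tendsto_nhdsGT_of_Icc {g : ℝ → ℝ} {a b : ℝ} (hab : a < b)
    (hg : ContinuousOn g (Icc a b)) : Tendsto g (𝓝[>] a) (𝓝 (g a)) :=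
  (hg a (left_mem_Icc.2 hab.le)).tendsto.mono_left
    (nhdsWithin_Icc_eq_nhdsGE hab ▸ nhdsWithin_mono _ Ioi_subset_Ici_self)

theorem HasDerivWithinAt.tendsto_div_nhdsGT {g : ℝ → ℝ} {d : ℝ}
    (hd : HasDerivWithinAt g d (Ioi 0) 0) (h0 : g 0 = 0) :
    Tendsto (fun x ↦ g x / x) (𝓝[>] 0) (𝓝 d) := by
  rw [hasDerivWithinAt_iff_tendsto_slope' self_notMem_Ioi] at hd
  refine hd.congr fun x ↦ ?_
  rw [slope_def_field, h0]
  ring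

theorem HasDerivWithinAt.nonneg_of_isMaxOn_Icc {H : ℝ → ℝ} {d a c : ℝ} (hac : a < c)
    (hd : HasDerivWithinAt H d (Icc a c) c) (hmax : IsMaxOn H (Icc a c) c) : 0 ≤ d := by
  have hcone : a - c ∈ posTangentConeAt (Icc a c) c :=
    sub_mem_posTangentConeAt_of_segment_subset
      ((segment_symm ℝ c a).trans_subset (segment_subset_Icc hac.le))
  have := hmax.localize.hasFDerivWithinAt_nonpos hd.hasFDerivWithinAt hcone
  simp only [ContinuousLinearMap.toSpanSingleton_apply, smul_eq_mul] at this
  nlinarith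

theorem forall_mem_Ioc_neg_of_first_crossing {H : ℝ → ℝ} {a b : ℝ}
    (hcont : ContinuousOn H (Ioc a b)) (hnear : ∀ᶠ x in 𝓝[>] a, H x < 0)
    (hstep : ∀ c ∈ Ioc a b, (∀ x ∈ Ioo a c, H x < 0) → H c < 0) :
    ∀ x ∈ Ioc a b, H x < 0 := by
  by_contra! ⟨x, hx, hHx⟩
  obtain ⟨δ, hδa, hδ⟩ := mem_nhdsGT_iff_exists_Ioo_subset.1 hnear
  have hδx : δ ≤ x := not_lt.1 fun h ↦ (hδ ⟨hx.1, h⟩).not_ge hHx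
  set K := Icc δ b ∩ H ⁻¹' Ici 0
  have hK : IsClosed K := (hcont.mono (Icc_subset_Ioc_left hδa)).preimage_isClosed_of_isClosed
    isClosed_Icc isClosed_Ici
  obtain ⟨c, ⟨hcδb, hHc⟩, hc_least⟩ :=
    (isCompact_Icc.of_isClosed_subset hK inter_subset_left).exists_isLeast
      ⟨x, ⟨hδx, hx.2⟩, hHx⟩
  refine (hstep c ⟨hδa.trans_le hcδb.1, hcδb.2⟩ fun y hy ↦ ?_).not_ge hHc
  by_contra! hHy
  rcases lt_or_ge y δ with hyδ | hδy
  · exact (hδ ⟨hy.1, hyδ⟩).not_ge hHy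
  · exact hy.2.not_ge (hc_least ⟨⟨hδy, hy.2.le.trans hcδb.2⟩, hHy⟩)

noncomputable def profileBracket (S : Set ℝ) (f : ℝ → ℝ) (x : ℝ) : ℝ :=
  derivWithin f S x * (x - 1 / x) - f x

namespace SolvesProfile

variable {a r : ℝ} {f : ℝ → ℝ}

theorem derivWithin_derivWithin_eq {S : Set ℝ} (hf : SolvesProfile a S f) {x : ℝ}
    (hxS : x ∈ S) (hx : x ≠ 0) :
    derivWithin (derivWithin f S) S x = (1 + derivWithin f S x ^ 2) * profileBracket S f x :=
  hf.2.2.2 x hxS hx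

theorem contDiffOn_derivWithin (hf : SolvesProfile a (Icc 0 r) f) (hr : 0 < r) :
    ContDiffOn ℝ 1 (derivWithin f (Icc 0 r)) (Icc 0 r) :=
  hf.1.derivWithin (uniqueDiffOn_Icc hr) (by norm_num)

theorem tendsto_derivWithin_nhdsGT_zero (hf : SolvesProfile a (Icc 0 r) f) (hr : 0 < r) :
    Tendsto (derivWithin f (Icc 0 r)) (𝓝[>] 0) (𝓝 0) := by
  simpa only [hf.2.2.1] using (hf.contDiffOn_derivWithin hr).continuousOn.tendsto_nhdsGT_of_Icc hr

theorem continuousOn_profileBracket (hf : SolvesProfile a (Icc 0 r) f) (hr : 0 < r) :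
    ContinuousOn (profileBracket (Icc 0 r) f) (Ioc 0 r) := by
  have hsub : Ioc 0 r ⊆ Icc 0 r := Ioc_subset_Icc_self
  have hinv : ContinuousOn (fun x : ℝ ↦ x - 1 / x) (Ioc 0 r) :=
    continuousOn_id.sub (continuousOn_const.div continuousOn_id fun x hx ↦ hx.1.ne')
  exact (((hf.contDiffOn_derivWithin hr).continuousOn.mono hsub).mul hinv).sub
    (hf.1.continuousOn.mono hsub)

theorem tendsto_profileBracket_nhdsGT_zero (hf : SolvesProfile a (Icc 0 r) f) (hr : 0 < r) :
    Tendsto (profileBracket (Icc 0 r) f) (𝓝[>] 0)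
      (𝓝 (-derivWithin (derivWithin f (Icc 0 r)) (Icc 0 r) 0 - a)) := by
  set g := derivWithin f (Icc 0 r)
  have hf0 : Tendsto f (𝓝[>] 0) (𝓝 a) := by
    simpa only [hf.2.1] using hf.1.continuousOn.tendsto_nhdsGT_of_Icc hr
  have hg' : HasDerivWithinAt g (derivWithin g (Icc 0 r) 0) (Ioi 0) 0 :=
    ((hf.contDiffOn_derivWithin hr).differentiableOn one_ne_zero 0 (left_mem_Icc.2 hr.le)
      ).hasDerivWithinAt.mono_of_mem_nhdsWithin
        (mem_of_superset (Ioc_mem_nhdsGT hr) Ioc_subset_Icc_self)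
  have hid : Tendsto (fun x : ℝ ↦ x) (𝓝[>] 0) (𝓝 0) :=
    tendsto_id.mono_left nhdsWithin_le_nhds
  convert (((hf.tendsto_derivWithin_nhdsGT_zero hr).mul hid).sub
    (hg'.tendsto_div_nhdsGT hf.2.2.1)).sub hf0 using 2 with x
  · rw [profileBracket]
    ring
  · ring

theorem derivWithin_derivWithin_zero (hf : SolvesProfile a (Icc 0 r) f) (hr : 0 < r) :
    derivWithin (derivWithin f (Icc 0 r)) (Icc 0 r) 0 = -(a / 2) := by
  set g' := derivWithin (derivWithin f (Icc 0 r)) (Icc 0 r)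
  have hcont : Tendsto g' (𝓝[>] 0) (𝓝 (g' 0)) :=
    ((hf.contDiffOn_derivWithin hr).continuousOn_derivWithin (uniqueDiffOn_Icc hr)
      le_rfl).tendsto_nhdsGT_of_Icc hr
  have hode : Tendsto g' (𝓝[>] 0) (𝓝 ((1 + 0 ^ 2) * (-g' 0 - a))) := by
    refine ((tendsto_const_nhds.add ((hf.tendsto_derivWithin_nhdsGT_zero hr).pow 2)).mul
      (hf.tendsto_profileBracket_nhdsGT_zero hr)).congr' ?_
    filter_upwards [Ioc_mem_nhdsGT hr] with x hx
    exact (hf.derivWithin_derivWithin_eq (Ioc_subset_Icc_self hx) hx.1.ne').symm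
  have := tendsto_nhds_unique hcont hode
  linarith

theorem eventually_profileBracket_neg (hf : SolvesProfile a (Icc 0 r) f) (ha : 0 < a)
    (hr : 0 < r) : ∀ᶠ x in 𝓝[>] 0, profileBracket (Icc 0 r) f x < 0 := by
  refine (hf.tendsto_profileBracket_nhdsGT_zero hr).eventually_lt_const ?_
  rw [hf.derivWithin_derivWithin_zero hr]
  linarith

theorem derivWithin_neg_of_profileBracket_neg (hf : SolvesProfile a (Icc 0 r) f) {c : ℝ}
    (hc : c ∈ Ioc 0 r) (hneg : ∀ x ∈ Ioo 0 c, profileBracket (Icc 0 r) f x < 0) :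
    derivWithin f (Icc 0 r) c < 0 := by
  have hr : 0 < r := hc.1.trans_le hc.2
  have hsub : Icc 0 c ⊆ Icc 0 r := Icc_subset_Icc_right hc.2
  have hanti : StrictAntiOn (derivWithin f (Icc 0 r)) (Icc 0 c) := by
    refine strictAntiOn_of_deriv_neg (convex_Icc 0 c)
      ((hf.contDiffOn_derivWithin hr).continuousOn.mono hsub) fun x hx ↦ ?_
    rw [interior_Icc] at hx
    rw [← derivWithin_of_mem_nhds (Icc_mem_nhds hx.1 (hx.2.trans_le hc.2)),
      hf.derivWithin_derivWithin_eq ⟨hx.1.le, hx.2.le.trans hc.2⟩ hx.1.ne']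
    exact mul_neg_of_pos_of_neg (by positivity) (hneg x hx)
  simpa only [hf.2.2.1] using hanti (left_mem_Icc.2 hc.1.le) (right_mem_Icc.2 hc.1.le) hc.1

theorem hasDerivWithinAt_profileBracket (hf : SolvesProfile a (Icc 0 r) f) {c : ℝ}
    (hc : c ∈ Ioc 0 r) :
    HasDerivWithinAt (profileBracket (Icc 0 r) f)
      (derivWithin (derivWithin f (Icc 0 r)) (Icc 0 r) c * (c - 1 / c)
        + derivWithin f (Icc 0 r) c / c ^ 2) (Icc 0 r) c := by
  have hr : 0 < r := hc.1.trans_le hc.2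
  have hcS : c ∈ Icc 0 r := Ioc_subset_Icc_self hc
  have hg := ((hf.contDiffOn_derivWithin hr).differentiableOn one_ne_zero c hcS).hasDerivWithinAt
  have hf' := (hf.1.differentiableOn two_ne_zero c hcS).hasDerivWithinAt
  have hw : HasDerivAt (fun x : ℝ ↦ x - 1 / x) (1 - -(c ^ 2)⁻¹) c := by
    simpa only [one_div, id_eq] using (hasDerivAt_id c).fun_sub (hasDerivAt_inv hc.1.ne')
  exact ((hg.mul hw.hasDerivWithinAt).sub hf').congr_deriv (by ring)

theorem profileBracket_neg_of_forall_Ioo (hf : SolvesProfile a (Icc 0 r) f) (hr1 : r < 1)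
    {c : ℝ} (hc : c ∈ Ioc 0 r) (hneg : ∀ x ∈ Ioo 0 c, profileBracket (Icc 0 r) f x < 0) :
    profileBracket (Icc 0 r) f c < 0 := by
  by_contra! hHc
  have hg : derivWithin f (Icc 0 r) c < 0 := hf.derivWithin_neg_of_profileBracket_neg hc hneg
  have hg' : 0 ≤ derivWithin (derivWithin f (Icc 0 r)) (Icc 0 r) c := by
    rw [hf.derivWithin_derivWithin_eq (Ioc_subset_Icc_self hc) hc.1.ne']
    positivity
  have hmax : IsMaxOn (profileBracket (Icc 0 r) f) (Icc (c / 2) c) c :=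
    isMaxOn_iff.2 fun x hx ↦ by
      rcases (hx.2 : x ≤ c).lt_or_eq with hxc | rfl
      · exact (hneg x ⟨(half_pos hc.1).trans_le hx.1, hxc⟩).le.trans hHc
      · exact le_rfl
  have hd := ((hf.hasDerivWithinAt_profileBracket hc).mono
    (Icc_subset_Icc (half_pos hc.1).le hc.2)).nonneg_of_isMaxOn_Icc (half_lt_self hc.1) hmax
  have h1 := mul_nonpos_of_nonneg_of_nonpos hg' (sub_one_div_neg hc.1 (hc.2.trans_lt hr1)).le
  have h2 : derivWithin f (Icc 0 r) c / c ^ 2 < 0 := div_neg_of_neg_of_pos hg (pow_pos hc.1 2)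
  linarith

theorem profileBracket_neg (hf : SolvesProfile a (Icc 0 r) f) (ha : 0 < a) (hr0 : 0 < r)
    (hr1 : r < 1) : ∀ x ∈ Ioc 0 r, profileBracket (Icc 0 r) f x < 0 :=
  forall_mem_Ioc_neg_of_first_crossing (hf.continuousOn_profileBracket hr0)
    (hf.eventually_profileBracket_neg ha hr0) fun _ ↦ hf.profileBracket_neg_of_forall_Ioo hr1

end SolvesProfile

/-- If `f ∈ C²([0,r])` (`0 < r < 1`) solves the profile equation with `f(0) = a > 0`,
`f'(0) = 0`, then `f > 0` on `[0,r]` and `f'' < 0` on `[0,r)`. -/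
theorem profile_positive_concave (a r : ℝ) (ha : 0 < a) (hr0 : 0 < r) (hr1 : r < 1)
    (f : ℝ → ℝ) (hf : SolvesProfile a (Icc 0 r) f) :
    (∀ x ∈ Icc (0:ℝ) r, 0 < f x) ∧
    (∀ x ∈ Ico (0:ℝ) r, derivWithin (derivWithin f (Icc 0 r)) (Icc 0 r) x < 0) := by
  have hH := hf.profileBracket_neg ha hr0 hr1
  refine ⟨fun x hx ↦ ?_, fun x hx ↦ ?_⟩
  · rcases hx.1.eq_or_lt with rfl | hx0
    · exact hf.2.1 ▸ ha
    have hg := hf.derivWithin_neg_of_profileBracket_neg ⟨hx0, hx.2⟩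
      fun y hy ↦ hH y ⟨hy.1, hy.2.le.trans hx.2⟩
    have hw := sub_one_div_neg hx0 (hx.2.trans_lt hr1)
    have hHx := hH x ⟨hx0, hx.2⟩
    rw [profileBracket] at hHx
    nlinarith
  · rcases hx.1.eq_or_lt with rfl | hx0
    · rw [hf.derivWithin_derivWithin_zero hr0]
      linarith
    rw [hf.derivWithin_derivWithin_eq (Ico_subset_Icc_self hx) hx0.ne']
    exact mul_neg_of_pos_of_neg (by positivity) (hH x ⟨hx0, hx.2.le⟩)
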